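/- arXiv:2304.13323 — 2 statements merged into one kernel-verified Lean document; each statement's English description precedes it below -/
import Mathlib

section
/- Let B and B̄ be finite multisets (lists) of nonzero rational numbers with power sums p_n(B) = Σ_{b∈B} bⁿ and p_n(B̄) = Σ_{b∈B̄} bⁿ, let g ∈ ℚ[[X]] be the Todd series (the unique power series with g·(exp(X) − 1) = X), and set a = (p₁(B) − p₁(B̄))/2. Then exp(aX) · ∏_{b∈B} g(bX) · (∏_{b∈B̄} g(bX))⁻¹ = exp(H), where H is the power series supported on even positive powers of X whose coefficient of X^{2n} equals −(B_{2n}/(2n·(2n)!))·(p_{2n}(B) − p_{2n}(B̄)) for every n ≥ 1, with B_{2n} the 2n-th Bernoulli number. -/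
/-- Substitution of a power series `H` with zero constant coefficient into the exponential
series `exp = ∑_{k≥0} Xᵏ/k!`.  Since `H` has zero constant term, the coefficient of `Xⁿ` in
`exp(H)` only receives contributions from `Hᵏ` with `k ≤ n`, so the finite sum below computes
the substitution exactly. -/
noncomputable def expSubst {R : Type*} [CommRing R] [Algebra ℚ R] (h : PowerSeries R) :
    PowerSeries R :=
  PowerSeries.mk fun n => ∑ k ∈ Finset.range (n + 1),
    algebraMap ℚ R (1 / k.factorial) * PowerSeries.coeff n (h ^ k)

/-!
The Todd series `g = X/(eˣ - 1)` has logarithmic derivative given by `X·(log g)' = 1 - X - g`,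
and reading this off coefficientwise gives
`log g = -X/2 - ∑_{n ≥ 1} B_{2n}/(2n·(2n)!) X^{2n}`, because `g·e^{X/2} = X/(2 sinh (X/2))` is even.
Since `exp` turns sums into products and commutes with rescaling, the left-hand side is the
exponential of `aX + ∑_{b ∈ B} (log g)(bX) - ∑_{b ∈ B̄} (log g)(bX)`, whose linear terms cancel by
the choice of `a`. Identifying `expSubst h` with `(exp R).subst h` gives `(exp h)' = exp h · h'` by
the chain rule, and every exponential identity used follows from `exp h` being the only series with
constant term `1` solving `f' = f·h'`.
-/

open PowerSeries

namespace PowerSeries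

variable {R : Type*}

section CommSemiring

variable [CommSemiring R]

@[simp]
theorem constantCoeff_rescale (c : R) (f : R⟦X⟧) :
    constantCoeff (rescale c f) = constantCoeff f := by
  rw [← coeff_zero_eq_constantCoeff_apply, coeff_rescale, pow_zero, one_mul,
    coeff_zero_eq_constantCoeff_apply]

theorem coeff_pow_eq_zero_of_lt {h : R⟦X⟧} (hh : constantCoeff h = 0) {n k : ℕ} (hnk : n < k) :
    coeff n (h ^ k) = 0 :=
  X_pow_dvd_iff.1 (pow_dvd_pow_of_dvd (X_dvd_iff.2 hh) k) n hnk

theorem coeff_multiset_sum_map_rescale (s : Multiset R) (f : R⟦X⟧) (m : ℕ) :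
    coeff m (s.map fun b => rescale b f).sum = (s.map (· ^ m)).sum * coeff m f := by
  simp [map_multiset_sum, Multiset.map_map, coeff_rescale, Multiset.sum_map_mul_right]

end CommSemiring

theorem exp_sub_one_ne_zero [CommRing R] [Algebra ℚ R] [Nontrivial R] : exp R - 1 ≠ 0 :=
  fun h => by simpa using congrArg (coeff 1) h

end PowerSeries

section ExpSubst

variable {R : Type*} [CommRing R] [Algebra ℚ R]

theorem expSubst_eq_subst_exp {h : R⟦X⟧} (hh : constantCoeff h = 0) :
    expSubst h = (exp R).subst h := by
  ext n
  rw [coeff_subst' (HasSubst.of_constantCoeff_zero' hh), expSubst, coeff_mk,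
    finsum_eq_sum_of_support_subset (s := Finset.range (n + 1))]
  · simp [smul_eq_mul]
  · intro k hk
    simp only [Function.mem_support, Finset.coe_range, Set.mem_Iio] at hk ⊢
    by_contra hnk
    exact hk (by rw [coeff_pow_eq_zero_of_lt hh (by omega), smul_zero])

theorem derivative_expSubst {h : R⟦X⟧} (hh : constantCoeff h = 0) :
    d⁄dX R (expSubst h) = expSubst h * d⁄dX R h := by
  rw [expSubst_eq_subst_exp hh, derivative_subst (HasSubst.of_constantCoeff_zero' hh),
    derivative_exp]

@[simp]
theorem constantCoeff_expSubst (h : R⟦X⟧) : constantCoeff (expSubst h) = 1 := by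
  rw [← coeff_zero_eq_constantCoeff_apply]
  simp [expSubst]

theorem expSubst_mul_expSubst_neg {h : R⟦X⟧} (hh : constantCoeff h = 0) :
    expSubst h * expSubst (-h) = 1 := by
  have := IsAddTorsionFree.of_module_rat R
  refine derivative.ext ?_ (by simp)
  rw [Derivation.leibniz, derivative_expSubst hh, derivative_expSubst (by simp [hh])]
  simp only [smul_eq_mul, map_neg, Derivation.map_one_eq_zero]
  ring

theorem eq_expSubst_of_derivative_eq_mul {f h : R⟦X⟧} (hh : constantCoeff h = 0)
    (hf : d⁄dX R f = f * d⁄dX R h) (hf₀ : constantCoeff f = 1) : f = expSubst h := by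
  have := IsAddTorsionFree.of_module_rat R
  have hf_mul : f * expSubst (-h) = 1 := by
    refine derivative.ext ?_ (by simp [hf₀])
    rw [Derivation.leibniz, hf, derivative_expSubst (by simp [hh])]
    simp only [smul_eq_mul, map_neg, Derivation.map_one_eq_zero]
    ring
  calc f = f * expSubst (-h) * expSubst h := by
        linear_combination -f * expSubst_mul_expSubst_neg hh
    _ = expSubst h := by rw [hf_mul, one_mul]

theorem expSubst_add {f h : R⟦X⟧} (hf : constantCoeff f = 0) (hh : constantCoeff h = 0) :
    expSubst (f + h) = expSubst f * expSubst h := by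
  refine (eq_expSubst_of_derivative_eq_mul (by simp [hf, hh]) ?_ (by simp)).symm
  rw [Derivation.leibniz, derivative_expSubst hf, derivative_expSubst hh]
  simp only [smul_eq_mul, map_add]
  ring

theorem expSubst_zero : expSubst (0 : R⟦X⟧) = 1 := by
  ext n
  rw [expSubst, coeff_mk, Finset.sum_eq_single 0] <;> simp_all [coeff_one]

theorem expSubst_multiset_sum (s : Multiset R⟦X⟧) (hs : ∀ f ∈ s, constantCoeff f = 0) :
    expSubst s.sum = (s.map expSubst).prod := by
  induction s using Multiset.induction with
  | empty => simp [expSubst_zero]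
  | cons f s ih =>
    have hs' : ∀ f ∈ s, constantCoeff f = 0 := fun f hf => hs f (Multiset.mem_cons_of_mem hf)
    have hsum : constantCoeff s.sum = 0 := by
      rw [map_multiset_sum]
      exact Multiset.sum_eq_zero (by simpa using hs')
    rw [Multiset.sum_cons, Multiset.map_cons, Multiset.prod_cons, ← ih hs',
      expSubst_add (hs f (Multiset.mem_cons_self f s)) hsum]

theorem rescale_expSubst (c : R) (h : R⟦X⟧) :
    rescale c (expSubst h) = expSubst (rescale c h) := by
  ext n
  simp only [expSubst, coeff_rescale, coeff_mk, Finset.mul_sum, ← map_pow]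
  exact Finset.sum_congr rfl fun k _ => by ring

theorem exp_eq_expSubst_X : exp R = expSubst X := by
  rw [expSubst_eq_subst_exp constantCoeff_X, X_subst]

theorem multiset_prod_map_rescale_expSubst (s : Multiset R) {h : R⟦X⟧}
    (hh : constantCoeff h = 0) :
    (s.map fun b => rescale b (expSubst h)).prod = expSubst (s.map fun b => rescale b h).sum := by
  rw [expSubst_multiset_sum _ (by simp [hh]), Multiset.map_map]
  simp only [Function.comp_def, rescale_expSubst]

end ExpSubst

/-- `log (X / (2 sinh (X / 2)))`, the logarithm of the even series `e^{X/2}·X/(eˣ - 1)`. -/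
noncomputable def evenToddLog : ℚ⟦X⟧ :=
  mk fun m => if m ≠ 0 ∧ Even m then -(bernoulli m / (m * m.factorial)) else 0

noncomputable def toddLog : ℚ⟦X⟧ := evenToddLog - C (1 / 2) * X

theorem coeff_toddLog (m : ℕ) :
    coeff m toddLog = coeff m evenToddLog - if m = 1 then 1 / 2 else 0 := by
  simp [toddLog, coeff_C_mul, coeff_X]

@[simp]
theorem constantCoeff_toddLog : constantCoeff toddLog = 0 := by
  simp [toddLog, evenToddLog]

theorem X_mul_derivative_toddLog : X * d⁄dX ℚ toddLog = 1 - X - bernoulliPowerSeries ℚ := by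
  ext n
  rcases n with _ | _ | n
  · simp [bernoulliPowerSeries]
  · norm_num [coeff_derivative, coeff_toddLog, evenToddLog, bernoulliPowerSeries, coeff_one]
  · simp only [coeff_succ_X_mul, coeff_derivative, coeff_toddLog, evenToddLog, coeff_mk,
      bernoulliPowerSeries, map_sub, coeff_one, coeff_X, Algebra.algebraMap_self, RingHom.id_apply]
    rcases Nat.even_or_odd (n + 2) with he | ho
    · rw [if_pos ⟨by omega, he⟩]
      push_cast
      field_simp
      simp
    · rw [if_neg fun h => Nat.not_even_iff_odd.2 ho h.2, bernoulli_eq_zero_of_odd ho (by omega)]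
      simp

theorem eq_bernoulliPowerSeries_of_mul_exp_sub_one {g : ℚ⟦X⟧} (hg : g * (exp ℚ - 1) = X) :
    g = bernoulliPowerSeries ℚ :=
  mul_right_cancel₀ exp_sub_one_ne_zero (by rw [hg, bernoulliPowerSeries_mul_exp_sub_one])

theorem bernoulliPowerSeries_eq_expSubst_toddLog : bernoulliPowerSeries ℚ = expSubst toddLog := by
  set g := bernoulliPowerSeries ℚ
  have hg : g * (exp ℚ - 1) = X := bernoulliPowerSeries_mul_exp_sub_one ℚ
  have hg' : d⁄dX ℚ g * (exp ℚ - 1) + g * exp ℚ = 1 := by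
    simpa [Derivation.leibniz, derivative_exp, add_comm, mul_comm] using congrArg (d⁄dX ℚ) hg
  refine eq_expSubst_of_derivative_eq_mul constantCoeff_toddLog ?_
    (by simp [g, bernoulliPowerSeries])
  -- with `L = toddLog`, `hg'` and `X_mul_derivative_toddLog` give `(g' - g·L')(eˣ - 1) = 0`
  refine mul_right_cancel₀ exp_sub_one_ne_zero ?_
  linear_combination hg' - d⁄dX ℚ toddLog * hg - X_mul_derivative_toddLog - hg

theorem generalized_todd_log_general (B Bbar : Multiset ℚ)
    (g : PowerSeries ℚ) (hg : g * (PowerSeries.exp ℚ - 1) = PowerSeries.X)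
    (a : ℚ) (ha : a = ((B.map fun b => b ^ 1).sum - (Bbar.map fun b => b ^ 1).sum) / 2)
    (H : PowerSeries ℚ)
    (hH : H = PowerSeries.mk fun m =>
      if m ≠ 0 ∧ Even m then
        -(bernoulli m / (m * m.factorial)) *
          ((B.map fun b => b ^ m).sum - (Bbar.map fun b => b ^ m).sum)
      else 0) :
    PowerSeries.rescale a (PowerSeries.exp ℚ) *
        (B.map fun b => PowerSeries.rescale b g).prod *
        Ring.inverse ((Bbar.map fun b => PowerSeries.rescale b g).prod) = expSubst H := by
  have hprod (s : Multiset ℚ) : (s.map fun b => rescale b g).prod =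
      expSubst (s.map fun b => rescale b toddLog).sum := by
    rw [eq_bernoulliPowerSeries_of_mul_exp_sub_one hg, bernoulliPowerSeries_eq_expSubst_toddLog,
      multiset_prod_map_rescale_expSubst s constantCoeff_toddLog]
  have hsum (s : Multiset ℚ) : constantCoeff (s.map fun b => rescale b toddLog).sum = 0 := by
    simp [map_multiset_sum]
  have hH₀ : constantCoeff H = 0 := by
    rw [← coeff_zero_eq_constantCoeff_apply, hH, coeff_mk, if_neg (by simp)]
  rw [hprod, hprod, eq_comm,
    Ring.eq_mul_inverse_iff_mul_eq _ _ _ (isUnit_iff_constantCoeff.2 (by simp)),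
    exp_eq_expSubst_X, rescale_expSubst, ← expSubst_add hH₀ (hsum Bbar),
    ← expSubst_add (by simp) (hsum B)]
  congr 1
  ext m
  simp only [hH, map_add, coeff_multiset_sum_map_rescale, coeff_toddLog, coeff_rescale, coeff_X,
    coeff_mk, evenToddLog]
  rcases eq_or_ne m 1 with rfl | hm
  · norm_num [ha]
    ring
  · simp only [hm, if_false]
    split_ifs <;> ring

/-- Let `B`, `B̄` be finite multisets of nonzero rationals with power sums
`p_n(B) = ∑_{b∈B} bⁿ`, `g` the Todd series (`g·(exp(X) − 1) = X`), and
`a = (p₁(B) − p₁(B̄))/2`.  Then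
`exp(aX)·∏_{b∈B} g(bX)·(∏_{b∈B̄} g(bX))⁻¹ = exp(H)` where `H` is supported on even
positive powers of `X`, with coefficient of `X^{2n}` equal to
`−(B_{2n}/(2n·(2n)!))·(p_{2n}(B) − p_{2n}(B̄))` for `n ≥ 1`. -/
theorem generalized_todd_log (B Bbar : Multiset ℚ)
    (hB : ∀ b ∈ B, b ≠ 0) (hBbar : ∀ b ∈ Bbar, b ≠ 0)
    (g : PowerSeries ℚ) (hg : g * (PowerSeries.exp ℚ - 1) = PowerSeries.X)
    (a : ℚ) (ha : a = ((B.map fun b => b ^ 1).sum - (Bbar.map fun b => b ^ 1).sum) / 2)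
    (H : PowerSeries ℚ)
    (hH : H = PowerSeries.mk fun m =>
      if m ≠ 0 ∧ Even m then
        -(bernoulli m / (m * m.factorial)) *
          ((B.map fun b => b ^ m).sum - (Bbar.map fun b => b ^ m).sum)
      else 0) :
    PowerSeries.rescale a (PowerSeries.exp ℚ) *
        (B.map fun b => PowerSeries.rescale b g).prod *
        Ring.inverse ((Bbar.map fun b => PowerSeries.rescale b g).prod) = expSubst H :=
  generalized_todd_log_general B Bbar g hg a ha H hH
end

section
/- The following identity holds for formal Laurent series in s with coefficients in the power series ring ℚ[[t]]: the coefficient of s⁰ in 1/((1 − e^s)²·(1 − t)) + 2/((1 − e^{−s})(1 − e^s)(1 − t·e^{s})) + 1/((1 − e^{−s})²·(1 − t·e^{2s})) equals (1 + t)·(1 − t)⁻³ in ℚ[[t]]. Here e^{cs} denotes the rescaled exponential series in s (with coefficients in ℚ[[t]]), the factors 1 − t, 1 − t·e^{s}, 1 − t·e^{2s} are invertible because their s-constant terms are units of ℚ[[t]], and 1 − e^{±s} have s-order 1, hence are invertible in the Laurent series ring over ℚ[[t]]. (This computes the Ehrhart series Σ_{n≥0}(n+1)²tⁿ of the unit square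 via Brion's decomposition.) -/
/-!
With `u = e^s` and `v = e^{-s} = u⁻¹`, the three terms are rational functions of `u` and `t`
whose poles at `u = 1` cancel: their sum is `(1 + t u) / ((1 - t)(1 - t u)(1 - t u²))`, an
identity valid in any commutative ring in which the denominators are units. This sum is the
image of a power series in `s`, so its coefficient of `s⁰` is obtained by setting `s = 0`,
i.e. `u = 1`, which gives `(1 + t) / (1 - t)³`.
-/

/-- The formal Laurent series `e^{cs}` in `s`, with coefficients in `ℚ[[t]]`: the image of
the rescaled exponential power series `exp(cs)` under the canonical embedding of power
series in `s` into Laurent series in `s` over `ℚ[[t]]`. -/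
noncomputable def expLaurentT (c : ℚ) : LaurentSeries (PowerSeries ℚ) :=
  (HahnSeries.ofPowerSeries ℤ (PowerSeries ℚ))
    (PowerSeries.rescale (PowerSeries.C c) (PowerSeries.exp (PowerSeries ℚ)))

/-- The element `t ∈ ℚ[[t]]`, viewed as a constant Laurent series in `s`. -/
noncomputable def tConst : LaurentSeries (PowerSeries ℚ) :=
  HahnSeries.C (PowerSeries.X : PowerSeries ℚ)

open PowerSeries

theorem map_ringInverse {M N F : Type*} [MonoidWithZero M] [MonoidWithZero N] [FunLike F M N]
    [MonoidHomClass F M N] (f : F) {a : M} (ha : IsUnit a) :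
    f (Ring.inverse a) = Ring.inverse (f a) := by
  obtain ⟨u, rfl⟩ := ha
  have hfu : IsUnit (f u) := u.isUnit.map f
  calc f (Ring.inverse u) = f ↑u⁻¹ * (f u * Ring.inverse (f u)) := by
        rw [Ring.inverse_unit, Ring.mul_inverse_cancel _ hfu, mul_one]
    _ = Ring.inverse (f u) := by rw [← mul_assoc, ← map_mul, u.inv_mul, map_one, one_mul]

theorem HahnSeries.isUnit_ofPowerSeries_of_isUnit_coeff_one {R : Type*} [CommRing R]
    {f : PowerSeries R} (hf₀ : constantCoeff f = 0) (hf₁ : IsUnit (PowerSeries.coeff 1 f)) :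
    IsUnit (ofPowerSeries ℤ R f) := by
  have hX : IsUnit (ofPowerSeries ℤ R PowerSeries.X) := by
    rw [ofPowerSeries_X]
    exact .of_mul_eq_one (single (-1) 1) (by rw [single_mul_single]; simp)
  have hshift : IsUnit (PowerSeries.mk fun n ↦ PowerSeries.coeff (n + 1) f) := by
    rwa [isUnit_iff_constantCoeff, ← coeff_zero_eq_constantCoeff_apply, coeff_mk]
  have hf : f = PowerSeries.X * PowerSeries.mk fun n ↦ PowerSeries.coeff (n + 1) f := by
    rw [← sub_const_eq_X_mul_shift, hf₀, map_zero, sub_zero]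
  rw [hf, map_mul]
  exact hX.mul (hshift.map _)

theorem HahnSeries.coeff_zero_ofPowerSeries_mul_ringInverse {R : Type*} [CommRing R]
    (f : PowerSeries R) {g : PowerSeries R} (hg : IsUnit (constantCoeff g)) :
    (ofPowerSeries ℤ R f * Ring.inverse (ofPowerSeries ℤ R g)).coeff 0 =
      constantCoeff f * Ring.inverse (constantCoeff g) := by
  have hg' : IsUnit g := isUnit_iff_constantCoeff.mpr hg
  rw [← map_ringInverse _ hg', ← map_mul, ← Nat.cast_zero, ofPowerSeries_apply_coeff,
    coeff_zero_eq_constantCoeff_apply, map_mul, map_ringInverse _ hg']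

theorem PowerSeries.constantCoeff_rescale_exp (A : Type*) [CommRing A] [Algebra ℚ A] (a : A) :
    constantCoeff (rescale a (exp A)) = 1 := by
  simp [← coeff_zero_eq_constantCoeff_apply, coeff_rescale, coeff_exp]

theorem PowerSeries.coeff_one_rescale_exp (A : Type*) [CommRing A] [Algebra ℚ A] (a : A) :
    coeff 1 (rescale a (exp A)) = a := by
  simp [coeff_rescale, coeff_exp]

theorem brion_unit_square_identity {R : Type*} [CommRing R] {u v t : R} (huv : u * v = 1)
    (hu : IsUnit (1 - u)) (h₀ : IsUnit (1 - t)) (h₁ : IsUnit (1 - t * u))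
    (h₂ : IsUnit (1 - t * u ^ 2)) :
    Ring.inverse ((1 - u) ^ 2 * (1 - t)) + 2 * Ring.inverse ((1 - v) * (1 - u) * (1 - t * u)) +
        Ring.inverse ((1 - v) ^ 2 * (1 - t * u ^ 2)) =
      (1 + t * u) * Ring.inverse ((1 - t) * (1 - t * u) * (1 - t * u ^ 2)) := by
  have hv : IsUnit (1 - v) := by
    have : 1 - v = -(v * (1 - u)) := by linear_combination -huv
    rw [this]
    exact ((IsUnit.of_mul_eq_one_right _ huv).mul hu).neg
  have e₁ := Ring.inverse_mul_cancel _ ((hu.pow 2).mul h₀)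
  have e₂ := Ring.inverse_mul_cancel _ ((hv.mul hu).mul h₁)
  have e₃ := Ring.inverse_mul_cancel _ ((hv.pow 2).mul h₂)
  have e := Ring.inverse_mul_cancel _ ((h₀.mul h₁).mul h₂)
  refine ((((hu.pow 2).mul (hv.pow 2)).mul ((h₀.mul h₁).mul h₂))).mul_right_cancel ?_
  linear_combination
    (1 - v) ^ 2 * (1 - t * u) * (1 - t * u ^ 2) * e₁ +
    2 * (1 - u) * (1 - v) * (1 - t) * (1 - t * u ^ 2) * e₂ +
    (1 - u) ^ 2 * (1 - t) * (1 - t * u) * e₃ -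
    (1 + t * u) * (1 - u) ^ 2 * (1 - v) ^ 2 * e +
    -- the numerator identity left after clearing denominators, which holds modulo `u * v - 1`
    (u ^ 2 * v * t ^ 2 - u ^ 2 * v * t + u * v * t - u * v - u * t ^ 2 -
      u * t + 2 * u - 2 * v * t + 2 * v + 3 * t - 3) * huv

theorem expLaurentT_add (a b : ℚ) : expLaurentT (a + b) = expLaurentT a * expLaurentT b := by
  simp only [expLaurentT, map_add, ← map_mul, exp_mul_exp_eq_exp_add]

theorem expLaurentT_zero : expLaurentT 0 = 1 := by
  simp [expLaurentT]

theorem tConst_eq_ofPowerSeries :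
    tConst = HahnSeries.ofPowerSeries ℤ (PowerSeries ℚ) (C PowerSeries.X) :=
  (HahnSeries.ofPowerSeries_C _).symm

theorem isUnit_one_sub_expLaurentT {c : ℚ} (hc : c ≠ 0) : IsUnit (1 - expLaurentT c) := by
  rw [expLaurentT, ← map_one (HahnSeries.ofPowerSeries ℤ _), ← map_sub]
  apply HahnSeries.isUnit_ofPowerSeries_of_isUnit_coeff_one
  · simp [constantCoeff_rescale_exp]
  · simpa [coeff_one_rescale_exp] using (Ne.isUnit hc).map (algebraMap ℚ (PowerSeries ℚ))

theorem isUnit_one_sub_tConst_mul_expLaurentT (c : ℚ) :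
    IsUnit (1 - tConst * expLaurentT c) := by
  rw [expLaurentT, tConst_eq_ofPowerSeries, ← map_mul, ← map_one (HahnSeries.ofPowerSeries ℤ _),
    ← map_sub]
  refine IsUnit.map _ (isUnit_iff_constantCoeff.mpr ?_)
  simp [constantCoeff_rescale_exp, isUnit_iff_constantCoeff]

/-- For Laurent series in `s` with coefficients in `ℚ[[t]]`: the factors
`1 − e^{±s}`, `1 − t`, `1 − t·e^s`, `1 − t·e^{2s}` are invertible, and the coefficient of
`s⁰` in `1/((1 − e^s)²(1 − t)) + 2/((1 − e^{−s})(1 − e^s)(1 − t e^s)) +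
1/((1 − e^{−s})²(1 − t e^{2s}))` equals `(1 + t)(1 − t)⁻³` in `ℚ[[t]]`
(the Ehrhart series `∑ (n+1)² tⁿ` of the unit square). -/
theorem ehrhart_series_unit_square :
    IsUnit (1 - expLaurentT 1) ∧ IsUnit (1 - expLaurentT (-1)) ∧
    IsUnit (1 - tConst) ∧
    IsUnit (1 - tConst * expLaurentT 1) ∧ IsUnit (1 - tConst * expLaurentT 2) ∧
    HahnSeries.coeff
        (Ring.inverse ((1 - expLaurentT 1) ^ 2 * (1 - tConst)) +
          2 * Ring.inverse
            ((1 - expLaurentT (-1)) * (1 - expLaurentT 1) * (1 - tConst * expLaurentT 1)) +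
          Ring.inverse ((1 - expLaurentT (-1)) ^ 2 * (1 - tConst * expLaurentT 2))) 0 =
      (1 + PowerSeries.X) * Ring.inverse ((1 - PowerSeries.X : PowerSeries ℚ) ^ 3) := by
  have hu := isUnit_one_sub_expLaurentT one_ne_zero
  have h₀ : IsUnit (1 - tConst) := by
    simpa [expLaurentT_zero] using isUnit_one_sub_tConst_mul_expLaurentT 0
  have h₂ := isUnit_one_sub_tConst_mul_expLaurentT 2
  have hsq : expLaurentT 2 = expLaurentT 1 ^ 2 := by rw [sq, ← expLaurentT_add]; norm_num
  have huv : expLaurentT 1 * expLaurentT (-1) = 1 := by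
    rw [← expLaurentT_add, add_neg_cancel, expLaurentT_zero]
  refine ⟨hu, isUnit_one_sub_expLaurentT (by norm_num), h₀,
    isUnit_one_sub_tConst_mul_expLaurentT 1, h₂, ?_⟩
  rw [hsq] at h₂ ⊢
  rw [brion_unit_square_identity huv hu h₀ (isUnit_one_sub_tConst_mul_expLaurentT 1) h₂]
  simp only [tConst_eq_ofPowerSeries, expLaurentT, ← map_pow, ← map_mul,
    ← map_one (HahnSeries.ofPowerSeries ℤ _), ← map_sub, ← map_add]
  rw [HahnSeries.coeff_zero_ofPowerSeries_mul_ringInverse]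
  all_goals simp only [map_add, map_sub, map_mul, map_pow, map_one, constantCoeff_C,
    constantCoeff_rescale_exp, mul_one, one_pow]
  · ring_nf
  · have hX : IsUnit (1 - X : PowerSeries ℚ) := isUnit_iff_constantCoeff.mpr (by simp)
    exact (hX.mul hX).mul hX
end
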